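/- arXiv:1210.1293 — 7 statements merged into one kernel-verified Lean document; each statement's English description precedes it below -/
import Mathlib

section
/- Let m, n ≥ 4 be even integers, B = [[2cos(π/m), 1], [−1, 0]] and C = [[−2cos(π/n), 1], [−1, 0]] in SL(2,ℝ). Then tr(B^{m/2}) = 0, (B^{m/2})² = −I, tr(C^{n/2}) = 0, (C^{n/2})² = −I, and under the Möbius action both B^{m/2} and C^{n/2} interchange the points 1 and −1 (i.e., B^{m/2}·1 = −1, B^{m/2}·(−1) = 1, C^{n/2}·1 = −1, C^{n/2}·(−1) = 1). -/
open Real Matrix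

/-- Möbius action of a 2×2 real matrix on a real number. -/
noncomputable def moebius (M : Matrix (Fin 2) (Fin 2) ℝ) (z : ℝ) : ℝ :=
  (M 0 0 * z + M 0 1) / (M 1 0 * z + M 1 1)

/-!
A unimodular 2×2 matrix satisfies `A² = (tr A) A - 1` (Cayley–Hamilton), so its powers obey
`A^(k+2) = (tr A) A^(k+1) - A^k`. When `tr A = 2 cos θ` this is the recurrence of `2 cos (k θ)`,
so `tr A^k = 2 cos (k θ)`. Both `B` (with `θ = π/m`) and `C` (with `θ = π - π/n`) are of this
form, and `k θ` is an odd multiple of `π/2` for the halfway power, which therefore has trace `0`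
and squares to `-1`. The recurrence also preserves the relation `A₁₀ = -A₀₁`, and a trace-zero
unimodular matrix with this relation swaps `1` and `-1`.
-/

namespace Matrix

variable {R : Type*} [CommRing R]

theorem sq_fin_two_eq_trace_smul_sub_det_smul (A : Matrix (Fin 2) (Fin 2) R) :
    A ^ 2 = A.trace • A - A.det • 1 := by
  ext i j
  fin_cases i <;> fin_cases j <;>
    simp [sq, mul_apply, trace_fin_two, det_fin_two] <;> ring

theorem pow_add_two_fin_two (A : Matrix (Fin 2) (Fin 2) R) (k : ℕ) :
    A ^ (k + 2) = A.trace • A ^ (k + 1) - A.det • A ^ k := by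
  rw [pow_add, sq_fin_two_eq_trace_smul_sub_det_smul, mul_sub, mul_smul_comm, mul_smul_comm,
    mul_one, ← pow_succ]

theorem sq_eq_neg_one_of_trace_eq_zero {A : Matrix (Fin 2) (Fin 2) R} (hdet : A.det = 1)
    (htr : A.trace = 0) : A ^ 2 = -1 := by
  simp [sq_fin_two_eq_trace_smul_sub_det_smul, hdet, htr]

theorem pow_apply_one_zero_of_apply_one_zero {A : Matrix (Fin 2) (Fin 2) R}
    (hA : A 1 0 = -A 0 1) (k : ℕ) : (A ^ k) 1 0 = -(A ^ k) 0 1 := by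
  induction k using Nat.twoStepInduction with
  | zero => simp
  | one => simpa using hA
  | more k ih₀ ih₁ =>
    simp only [pow_add_two_fin_two, sub_apply, smul_apply, smul_eq_mul, ih₀, ih₁]
    ring

theorem trace_pow_of_trace_eq_two_mul_cos {A : Matrix (Fin 2) (Fin 2) ℝ} {θ : ℝ}
    (hdet : A.det = 1) (htr : A.trace = 2 * cos θ) (k : ℕ) :
    (A ^ k).trace = 2 * cos (k * θ) := by
  induction k using Nat.twoStepInduction with
  | zero => simp
  | one => simpa using htr
  | more k ih₀ ih₁ =>
    rw [pow_add_two_fin_two, trace_sub, trace_smul, trace_smul, ih₀, ih₁, htr, hdet]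
    have h₂ : ((k + 2 : ℕ) : ℝ) * θ = (k + 1 : ℕ) * θ + θ := by push_cast; ring
    have h₀ : (k : ℝ) * θ = (k + 1 : ℕ) * θ - θ := by push_cast; ring
    rw [h₂, h₀, cos_add, cos_sub]
    ring

end Matrix

theorem moebius_one_and_neg_one_of_trace_eq_zero {A : Matrix (Fin 2) (Fin 2) ℝ}
    (hdet : A.det = 1) (htr : A.trace = 0) (hA : A 1 0 = -A 0 1) :
    moebius A 1 = -1 ∧ moebius A (-1) = 1 := by
  rw [trace_fin_two] at htr
  rw [det_fin_two] at hdet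
  have hd : A 1 1 = -A 0 0 := by linear_combination htr
  unfold moebius
  rw [hd, hA] at hdet ⊢
  -- the product of the two denominators is `-det A`
  have hden : (-A 0 1 * 1 + -A 0 0) * (-A 0 1 * (-1) + -A 0 0) ≠ 0 := by
    rw [show _ * _ = (-1 : ℝ) by linear_combination -hdet]
    norm_num
  obtain ⟨hden₁, hden₂⟩ := mul_ne_zero_iff.mp hden
  exact ⟨by rw [div_eq_iff hden₁]; ring, by rw [div_eq_iff hden₂]; ring⟩

theorem pow_swaps_one_neg_one_of_cos_mul_eq_zero {A : Matrix (Fin 2) (Fin 2) ℝ}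
    {θ : ℝ} {k : ℕ} (hdet : A.det = 1) (htr : A.trace = 2 * cos θ) (hA : A 1 0 = -A 0 1)
    (hk : cos (k * θ) = 0) :
    (A ^ k).trace = 0 ∧ (A ^ k) ^ 2 = -1 ∧ moebius (A ^ k) 1 = -1 ∧ moebius (A ^ k) (-1) = 1 := by
  have hdetk : (A ^ k).det = 1 := by rw [det_pow, hdet, one_pow]
  have htrk : (A ^ k).trace = 0 := by
    rw [trace_pow_of_trace_eq_two_mul_cos hdet htr, hk, mul_zero]
  exact ⟨htrk, sq_eq_neg_one_of_trace_eq_zero hdetk htrk,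
    moebius_one_and_neg_one_of_trace_eq_zero hdetk htrk (pow_apply_one_zero_of_apply_one_zero hA k)⟩

theorem stmt2 (m n : ℕ) (hm : 4 ≤ m) (hn : 4 ≤ n) (hme : Even m) (hne : Even n)
    (B C : Matrix.SpecialLinearGroup (Fin 2) ℝ)
    (hB : (B : Matrix (Fin 2) (Fin 2) ℝ) =
      !![2 * Real.cos (Real.pi / (m : ℝ)), 1; -1, 0])
    (hC : (C : Matrix (Fin 2) (Fin 2) ℝ) =
      !![-(2 * Real.cos (Real.pi / (n : ℝ))), 1; -1, 0]) :
    Matrix.trace ((B ^ (m / 2) : Matrix.SpecialLinearGroup (Fin 2) ℝ) :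
        Matrix (Fin 2) (Fin 2) ℝ) = 0 ∧
    (((B ^ (m / 2) : Matrix.SpecialLinearGroup (Fin 2) ℝ) :
        Matrix (Fin 2) (Fin 2) ℝ)) ^ 2 = -1 ∧
    Matrix.trace ((C ^ (n / 2) : Matrix.SpecialLinearGroup (Fin 2) ℝ) :
        Matrix (Fin 2) (Fin 2) ℝ) = 0 ∧
    (((C ^ (n / 2) : Matrix.SpecialLinearGroup (Fin 2) ℝ) :
        Matrix (Fin 2) (Fin 2) ℝ)) ^ 2 = -1 ∧
    moebius ((B ^ (m / 2) : Matrix.SpecialLinearGroup (Fin 2) ℝ) :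
        Matrix (Fin 2) (Fin 2) ℝ) 1 = -1 ∧
    moebius ((B ^ (m / 2) : Matrix.SpecialLinearGroup (Fin 2) ℝ) :
        Matrix (Fin 2) (Fin 2) ℝ) (-1) = 1 ∧
    moebius ((C ^ (n / 2) : Matrix.SpecialLinearGroup (Fin 2) ℝ) :
        Matrix (Fin 2) (Fin 2) ℝ) 1 = -1 ∧
    moebius ((C ^ (n / 2) : Matrix.SpecialLinearGroup (Fin 2) ℝ) :
        Matrix (Fin 2) (Fin 2) ℝ) (-1) = 1 := by
  obtain ⟨j, rfl⟩ := hme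
  obtain ⟨l, rfl⟩ := hne
  have hj : (j : ℝ) ≠ 0 := by norm_cast; omega
  have hl : (l : ℝ) ≠ 0 := by norm_cast; omega
  have hcosB : cos (((j + j) / 2 : ℕ) * (π / (j + j : ℕ))) = 0 := by
    rw [show (j + j) / 2 = j by omega, ← cos_pi_div_two]
    congr 1
    push_cast
    field_simp
    ring
  have hcosC : cos (((l + l) / 2 : ℕ) * (π - π / (l + l : ℕ))) = 0 := by
    rw [show (l + l) / 2 = l by omega, cos_eq_zero_iff]
    refine ⟨l - 1, ?_⟩
    push_cast
    field_simp
    ring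
  have hBk := pow_swaps_one_neg_one_of_cos_mul_eq_zero B.det_coe
    (by rw [hB, trace_fin_two_of, add_zero]) (by simp [hB]) hcosB
  have hCk := pow_swaps_one_neg_one_of_cos_mul_eq_zero C.det_coe
    (by rw [hC, trace_fin_two_of, add_zero, cos_pi_sub]; ring) (by simp [hC]) hcosC
  rw [← Matrix.SpecialLinearGroup.coe_pow] at hBk hCk
  obtain ⟨hB₁, hB₂, hB₃, hB₄⟩ := hBk
  obtain ⟨hC₁, hC₂, hC₃, hC₄⟩ := hCk
  exact ⟨hB₁, hB₂, hC₁, hC₂, hB₃, hB₄, hC₃, hC₄⟩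
end

section
/- Let m, n ≥ 4 be even integers, B = [[2cos(π/m), 1], [−1, 0]] and C = [[−2cos(π/n), 1], [−1, 0]] in SL(2,ℝ), and set H = B^{m/2}·C^{n/2}. Then |tr H| = 2(1 + cos(π/m)cos(π/n))/(sin(π/m)sin(π/n)) > 2 (so H is hyperbolic), and H fixes both 1 and −1 under the Möbius action: H·1 = 1 and H·(−1) = −1. -/
open Real Matrix

/-!
Write `α = π / m`, `β = π / n`. The entries of `sin θ • !![2 cos θ, 1; -1, 0] ^ k` are the
Chebyshev values `± sin ((k + 1) θ)`, `± sin (k θ)`, `± sin ((k - 1) θ)`, which collapse to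
`± sin (k θ) cos θ` and `± sin (k θ)` as soon as `cos (k θ) = 0`. This happens for `B ^ (m / 2)`
with `θ = α`, and for `C ^ (n / 2)` once `C` is written with `θ = π - β`. Hence `H` is a nonzero
multiple of a symmetric matrix `!![x, y; y, x]`, whose Möbius action fixes `1` and `-1`, and
`|tr H| > 2` reduces to `cos (α + β) > -1`.
-/

lemma moebius_smul (M : Matrix (Fin 2) (Fin 2) ℝ) {r : ℝ} (hr : r ≠ 0) (z : ℝ) :
    moebius (r • M) z = moebius M z := by
  simp only [moebius, Matrix.smul_apply, smul_eq_mul, mul_assoc, ← mul_add]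
  exact mul_div_mul_left _ _ hr

lemma moebius_symmetric_one {x y : ℝ} (h : x + y ≠ 0) : moebius !![x, y; y, x] 1 = 1 := by
  simp [moebius, add_comm y x, h]

lemma moebius_symmetric_neg_one {x y : ℝ} (h : x ≠ y) : moebius !![x, y; y, x] (-1) = -1 := by
  have h' : -y + x ≠ 0 := by rwa [neg_add_eq_sub, sub_ne_zero]
  simp only [moebius, of_apply, cons_val', cons_val_zero, cons_val_one, empty_val',
    cons_val_fin_one, mul_neg, mul_one]
  rw [show -x + y = -(-y + x) by ring, neg_div_self h']

lemma abs_trace_eq_of_smul_eq {M : Matrix (Fin 2) (Fin 2) ℝ} {s ε x y : ℝ} (hs : 0 < s)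
    (hε : |ε| = 1) (h : s • M = ε • !![x, y; y, x]) : |trace M| = 2 * |x| / s := by
  have htr : s * trace M = ε * x + ε * x := by simpa [trace_fin_two] using congrArg trace h
  rw [eq_div_iff hs.ne', ← abs_of_pos hs, ← abs_mul, mul_comm, htr, ← mul_add, abs_mul, hε,
    one_mul, ← two_mul, abs_mul, abs_two]

lemma sin_smul_pow (θ : ℝ) (k : ℕ) :
    sin θ • !![2 * cos θ, 1; -1, 0] ^ k =
      !![sin ((k + 1) * θ), sin (k * θ); -sin (k * θ), -sin ((k - 1) * θ)] := by
  induction k with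
  | zero => ext i j; fin_cases i <;> fin_cases j <;> simp [one_fin_two]
  | succ k ih =>
    rw [pow_succ, ← smul_mul_assoc, ih, mul_fin_two]
    push_cast
    have h₁ : ((k : ℝ) + 1 + 1) * θ = k * θ + θ + θ := by ring
    have h₂ : ((k : ℝ) + 1) * θ = k * θ + θ := by ring
    have h₃ : ((k : ℝ) - 1) * θ = k * θ - θ := by ring
    rw [h₁, h₂, h₃, add_sub_cancel_right]
    ext i j
    fin_cases i <;> fin_cases j <;> simp [sin_add, sin_sub, cos_add] <;>
      first | ring1 | linear_combination sin (k * θ) * sin_sq_add_cos_sq θ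

lemma sin_smul_pow_of_cos_mul_eq_zero {θ : ℝ} {k : ℕ} (h : cos (k * θ) = 0) :
    sin θ • !![2 * cos θ, 1; -1, 0] ^ k = sin (k * θ) • !![cos θ, 1; -1, -cos θ] := by
  rw [sin_smul_pow, add_mul, sub_mul, one_mul, sin_add, sin_sub, h]
  ext i j; fin_cases i <;> fin_cases j <;> simp [mul_comm]

lemma natCast_half_mul_pi_div {m : ℕ} (hm : Even m) (hm₀ : m ≠ 0) :
    ((m / 2 : ℕ) : ℝ) * (π / m) = π / 2 := by
  obtain ⟨j, rfl⟩ := hm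
  have : (j : ℝ) ≠ 0 := by exact_mod_cast (by omega : j ≠ 0)
  rw [← two_mul, Nat.mul_div_cancel_left _ two_pos]
  push_cast
  field_simp

lemma sin_smul_pow_half {m : ℕ} (hm : Even m) (hm₀ : m ≠ 0) :
    sin (π / m) • !![2 * cos (π / m), 1; -1, 0] ^ (m / 2) =
      !![cos (π / m), 1; -1, -cos (π / m)] := by
  have h := natCast_half_mul_pi_div hm hm₀
  rw [sin_smul_pow_of_cos_mul_eq_zero (by rw [h, cos_pi_div_two]), h, sin_pi_div_two, one_smul]

lemma sin_smul_neg_pow_half {n : ℕ} (hn : Even n) (hn₀ : n ≠ 0) :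
    sin (π / n) • !![-(2 * cos (π / n)), 1; -1, 0] ^ (n / 2) =
      (-(-1) ^ (n / 2) : ℝ) • !![-cos (π / n), 1; -1, cos (π / n)] := by
  have h : ((n / 2 : ℕ) : ℝ) * (π - π / n) = (n / 2 : ℕ) * π - π / 2 := by
    rw [mul_sub, natCast_half_mul_pi_div hn hn₀]
  have hc : -(2 * cos (π / n)) = 2 * cos (π - π / n) := by rw [cos_pi_sub, mul_neg]
  rw [← sin_pi_sub, hc,
    sin_smul_pow_of_cos_mul_eq_zero (by rw [h, cos_sub_pi_div_two, sin_nat_mul_pi]), h,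
    sin_nat_mul_pi_sub, sin_pi_div_two, mul_one, cos_pi_sub, neg_neg]

lemma sin_mul_sin_smul_pow_half_mul_neg_pow_half {m n : ℕ} (hm : Even m) (hm₀ : m ≠ 0)
    (hn : Even n) (hn₀ : n ≠ 0) :
    (sin (π / m) * sin (π / n)) •
        (!![2 * cos (π / m), 1; -1, 0] ^ (m / 2) * !![-(2 * cos (π / n)), 1; -1, 0] ^ (n / 2)) =
      (-(-1) ^ (n / 2) : ℝ) •
        !![-(1 + cos (π / m) * cos (π / n)), cos (π / m) + cos (π / n);
          cos (π / m) + cos (π / n), -(1 + cos (π / m) * cos (π / n))] := by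
  rw [← smul_mul_smul_comm, sin_smul_pow_half hm hm₀, sin_smul_neg_pow_half hn hn₀,
    mul_smul_comm, mul_fin_two]
  congr 1
  ext i j; fin_cases i <;> fin_cases j <;> simp <;> ring

lemma neg_one_lt_cos {θ : ℝ} (h₀ : 0 ≤ θ) (h : θ < π) : -1 < cos θ := by
  simpa using cos_lt_cos_of_nonneg_of_le_pi h₀ le_rfl h

lemma sin_mul_sin_lt_one_add_cos_mul_cos {α β : ℝ} (h₀ : 0 ≤ α + β) (h : α + β < π) :
    sin α * sin β < 1 + cos α * cos β := by
  linarith [cos_add α β, neg_one_lt_cos h₀ h]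

lemma pi_div_natCast_mem_Ioo {m : ℕ} (hm : 2 < m) : π / m ∈ Set.Ioo 0 (π / 2) :=
  ⟨by positivity, div_lt_div_of_pos_left pi_pos two_pos (by exact_mod_cast hm)⟩

lemma cos_mem_Ioo_zero_one {θ : ℝ} (hθ : θ ∈ Set.Ioo 0 (π / 2)) : cos θ ∈ Set.Ioo 0 1 :=
  ⟨cos_pos_of_mem_Ioo ⟨by linarith [hθ.1, pi_pos], hθ.2⟩,
    by simpa using cos_lt_cos_of_nonneg_of_le_pi le_rfl (by linarith [hθ.2, pi_pos]) hθ.1⟩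

theorem stmt3 (m n : ℕ) (hm : 4 ≤ m) (hn : 4 ≤ n) (hme : Even m) (hne : Even n)
    (B C : Matrix.SpecialLinearGroup (Fin 2) ℝ)
    (hB : (B : Matrix (Fin 2) (Fin 2) ℝ) =
      !![2 * Real.cos (Real.pi / (m : ℝ)), 1; -1, 0])
    (hC : (C : Matrix (Fin 2) (Fin 2) ℝ) =
      !![-(2 * Real.cos (Real.pi / (n : ℝ))), 1; -1, 0])
    (H : Matrix.SpecialLinearGroup (Fin 2) ℝ) (hH : H = B ^ (m / 2) * C ^ (n / 2)) :
    |Matrix.trace ((H : Matrix (Fin 2) (Fin 2) ℝ))| =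
        2 * (1 + Real.cos (Real.pi / (m : ℝ)) * Real.cos (Real.pi / (n : ℝ))) /
          (Real.sin (Real.pi / (m : ℝ)) * Real.sin (Real.pi / (n : ℝ))) ∧
    2 < |Matrix.trace ((H : Matrix (Fin 2) (Fin 2) ℝ))| ∧
    moebius (H : Matrix (Fin 2) (Fin 2) ℝ) 1 = 1 ∧
    moebius (H : Matrix (Fin 2) (Fin 2) ℝ) (-1) = -1 := by
  have hα := pi_div_natCast_mem_Ioo (m := m) (by omega)
  have hβ := pi_div_natCast_mem_Ioo (m := n) (by omega)
  have hcα := cos_mem_Ioo_zero_one hα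
  have hcβ := cos_mem_Ioo_zero_one hβ
  have hs : 0 < sin (π / m) * sin (π / n) :=
    mul_pos (sin_pos_of_pos_of_lt_pi hα.1 (by linarith [hα.2, pi_pos]))
      (sin_pos_of_pos_of_lt_pi hβ.1 (by linarith [hβ.2, pi_pos]))
  have hε : |(-(-1) ^ (n / 2) : ℝ)| = 1 := by simp
  have key := sin_mul_sin_smul_pow_half_mul_neg_pow_half hme (by omega) hne (by omega)
  rw [← hB, ← hC, ← Matrix.SpecialLinearGroup.coe_pow, ← Matrix.SpecialLinearGroup.coe_pow,
    ← Matrix.SpecialLinearGroup.coe_mul, ← hH] at key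
  have htrace := abs_trace_eq_of_smul_eq hs hε key
  rw [abs_neg, abs_of_pos (by nlinarith [hcα.1, hcβ.1] : 0 < 1 + cos (π / m) * cos (π / n))]
    at htrace
  refine ⟨htrace, ?_, ?_, ?_⟩
  · rw [htrace, lt_div_iff₀ hs]
    have hsum : 0 ≤ π / m + π / n ∧ π / m + π / n < π := by
      constructor <;> linarith [hα.1, hα.2, hβ.1, hβ.2]
    linarith [sin_mul_sin_lt_one_add_cos_mul_cos hsum.1 hsum.2]
  · rw [← moebius_smul _ hs.ne', key, moebius_smul _ (by simp), moebius_symmetric_one]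
    nlinarith [mul_pos (sub_pos.2 hcα.2) (sub_pos.2 hcβ.2)]
  · rw [← moebius_smul _ hs.ne', key, moebius_smul _ (by simp), moebius_symmetric_neg_one]
    nlinarith [hcα.1, hcβ.1]
end

section
/- Let m, n ≥ 4 be even integers, B = [[2cos(π/m), 1], [−1, 0]] and C = [[−2cos(π/n), 1], [−1, 0]] in SL(2,ℝ). Set λ = (cos(π/m)cos(π/n) + cos(π/m) + cos(π/n) + 1)/(sin(π/m)sin(π/n)). Then λ > 1 and the eigenvalues of the matrix (−1)^{n/2}·B^{m/2}·C^{n/2} are exactly λ and λ^{−1}. -/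
/-!
With θ = π/m, B is E(θ) = [[2 cos θ, 1], [-1, 0]], whose powers are sines of multiples of θ:
sin θ · E(θ)^k = [[sin (k+1)θ, sin kθ], [-sin kθ, -sin (k-1)θ]]. Since (m/2)·θ = π/2, this gives
sin θ · B^{m/2} = [[cos θ, 1], [-1, -cos θ]]. With φ = π/n and D = diag(1, -1) we have
C = -D E(φ) D, so (-1)^{n/2} C^{n/2} = D E(φ)^{n/2} D is computed in the same way. The product has
determinant 1 and trace 2 (cos θ cos φ + 1)/(sin θ sin φ) = λ + λ⁻¹, so its eigenvalues are the
roots λ, λ⁻¹ of x² - (λ + λ⁻¹) x + 1.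
-/

open Real Matrix

noncomputable def ellipticMatrix (θ : ℝ) : Matrix (Fin 2) (Fin 2) ℝ := !![2 * cos θ, 1; -1, 0]

lemma sin_smul_ellipticMatrix_pow (θ : ℝ) (k : ℕ) :
    sin θ • ellipticMatrix θ ^ k =
      !![sin ((k + 1) * θ), sin (k * θ); -sin (k * θ), -sin ((k - 1) * θ)] := by
  induction k with
  | zero =>
    ext i j
    fin_cases i <;> fin_cases j <;> simp [neg_mul, sin_neg]
  | succ k ih =>
    rw [pow_succ, ← smul_mul_assoc, ih, ellipticMatrix]
    push_cast
    rw [show ((k : ℝ) + 1 + 1) * θ = k * θ + θ + θ by ring,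
      show ((k : ℝ) + 1) * θ = k * θ + θ by ring, show ((k : ℝ) + 1 - 1) * θ = k * θ by ring,
      show ((k : ℝ) - 1) * θ = k * θ - θ by ring]
    ext i j
    fin_cases i <;> fin_cases j <;> simp [sin_add, sin_sub, cos_add]
    · linear_combination sin (k * θ) * sin_sq_add_cos_sq θ
    · ring

lemma sin_smul_ellipticMatrix_pow_of_mul_eq_pi_div_two {θ : ℝ} {k : ℕ} (hk : k * θ = π / 2) :
    sin θ • ellipticMatrix θ ^ k = !![cos θ, 1; -1, -cos θ] := by
  rw [sin_smul_ellipticMatrix_pow, hk, add_mul, one_mul, sub_mul, one_mul, hk,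
    sin_pi_div_two, sin_add, sin_pi_div_two_sub, sin_pi_div_two, cos_pi_div_two]
  simp

lemma mul_mul_pow_of_mul_self_eq_one {M : Type*} [Monoid M] {d : M} (hd : d * d = 1)
    (x : M) (l : ℕ) : (d * x * d) ^ l = d * x ^ l * d := by
  induction l with
  | zero => simpa using hd.symm
  | succ l ih =>
    rw [pow_succ, ih, pow_succ]
    simp only [mul_assoc]
    rw [← mul_assoc d d, hd, one_mul]

lemma neg_one_pow_smul_pow_eq_conj_ellipticMatrix_pow (φ : ℝ) (l : ℕ) :
    (-1 : ℝ) ^ l • !![-(2 * cos φ), 1; -1, 0] ^ l =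
      !![1, 0; 0, -1] * ellipticMatrix φ ^ l * !![1, 0; 0, -1] := by
  have hconj : (-1 : ℝ) • !![-(2 * cos φ), 1; -1, 0] =
      !![1, 0; 0, -1] * ellipticMatrix φ * !![1, 0; 0, -1] := by
    ext i j
    fin_cases i <;> fin_cases j <;> simp [ellipticMatrix]
  have hD : !![(1 : ℝ), 0; 0, -1] * !![1, 0; 0, -1] = 1 := by
    rw [mul_fin_two, one_fin_two]
    norm_num
  rw [← smul_pow, hconj, mul_mul_pow_of_mul_self_eq_one hD]

lemma Matrix.spectrum_eq_pair_inv_of_det_eq_one {K : Type*} [Field K]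
    (A : Matrix (Fin 2) (Fin 2) K) (hdet : A.det = 1) {μ : K} (hμ : μ ≠ 0)
    (htr : A.trace = μ + μ⁻¹) : spectrum K A = {μ, μ⁻¹} := by
  ext x
  have hfac : x ^ 2 - (μ + μ⁻¹) * x + 1 = (x - μ) * (x - μ⁻¹) := by
    field_simp
    ring
  simp [mem_spectrum_iff_isRoot_charpoly, charpoly_fin_two, hdet, htr, hfac, sub_eq_zero]

lemma sin_pi_div_pos {m : ℕ} (hm : 1 < m) : 0 < sin (π / m) := by
  have hm' : (1 : ℝ) < m := by exact_mod_cast hm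
  exact sin_pos_of_pos_of_lt_pi (by positivity) (div_lt_self pi_pos hm')

lemma cos_pi_div_pos {m : ℕ} (hm : 2 < m) : 0 < cos (π / m) := by
  have hm' : (2 : ℝ) < m := by exact_mod_cast hm
  refine cos_pos_of_mem_Ioo ⟨by linarith [pi_pos, div_pos pi_pos (by linarith : (0 : ℝ) < m)], ?_⟩
  exact div_lt_div_of_pos_left pi_pos two_pos hm'

lemma half_mul_pi_div_of_even {m : ℕ} (hm : Even m) (hm0 : m ≠ 0) :
    ((m / 2 : ℕ) : ℝ) * (π / m) = π / 2 := by
  rw [Nat.cast_div hm.two_dvd two_ne_zero]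
  field_simp
  norm_num

/-- This is cot (θ/2) · cot (φ/2), as (1 + cos θ) / sin θ = cot (θ/2). -/
noncomputable def cotHalfProd (θ φ : ℝ) : ℝ :=
  (cos θ * cos φ + cos θ + cos φ + 1) / (sin θ * sin φ)

lemma one_lt_cotHalfProd {θ φ : ℝ} (hsθ : 0 < sin θ) (hcθ : 0 < cos θ) (hsφ : 0 < sin φ)
    (hcφ : 0 < cos φ) : 1 < cotHalfProd θ φ := by
  rw [cotHalfProd, one_lt_div (by positivity)]
  nlinarith [sin_le_one θ, sin_le_one φ]

lemma cotHalfProd_add_inv {θ φ : ℝ} (hθ : sin θ ≠ 0) (hφ : sin φ ≠ 0) :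
    cotHalfProd θ φ + (cotHalfProd θ φ)⁻¹ = 2 * (cos θ * cos φ + 1) / (sin θ * sin φ) := by
  have hinv : (cotHalfProd θ φ)⁻¹ = (1 - cos θ) * (1 - cos φ) / (sin θ * sin φ) := by
    refine inv_eq_of_mul_eq_one_right ?_
    rw [cotHalfProd, div_mul_div_comm, div_eq_one_iff_eq (by positivity)]
    linear_combination
      -(1 - cos φ ^ 2) * cos_sq_add_sin_sq θ - sin θ ^ 2 * cos_sq_add_sin_sq φ
  rw [hinv, cotHalfProd, ← add_div]
  ring_nf

lemma sin_mul_sin_mul_trace_of_mul_eq_pi_div_two {θ φ : ℝ} {k l : ℕ} (hk : k * θ = π / 2)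
    (hl : l * φ = π / 2) :
    sin θ * sin φ *
        trace ((-1 : ℝ) ^ l • (ellipticMatrix θ ^ k * !![-(2 * cos φ), 1; -1, 0] ^ l)) =
      2 * (cos θ * cos φ + 1) := by
  rw [← mul_smul_comm, neg_one_pow_smul_pow_eq_conj_ellipticMatrix_pow, ← smul_eq_mul,
    ← trace_smul,
    show (sin θ * sin φ) • (ellipticMatrix θ ^ k *
        (!![1, 0; 0, -1] * ellipticMatrix φ ^ l * !![1, 0; 0, -1])) =
      (sin θ • ellipticMatrix θ ^ k) *
        (!![1, 0; 0, -1] * (sin φ • ellipticMatrix φ ^ l) * !![1, 0; 0, -1]) by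
      simp only [mul_smul_comm, smul_mul_assoc, mul_smul]
      exact smul_comm _ _ _,
    sin_smul_ellipticMatrix_pow_of_mul_eq_pi_div_two hk,
    sin_smul_ellipticMatrix_pow_of_mul_eq_pi_div_two hl]
  simp [trace_fin_two]
  ring

theorem stmt4 (m n : ℕ) (hm : 4 ≤ m) (hn : 4 ≤ n) (hme : Even m) (hne : Even n)
    (B C : Matrix.SpecialLinearGroup (Fin 2) ℝ)
    (hB : (B : Matrix (Fin 2) (Fin 2) ℝ) =
      !![2 * Real.cos (Real.pi / (m : ℝ)), 1; -1, 0])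
    (hC : (C : Matrix (Fin 2) (Fin 2) ℝ) =
      !![-(2 * Real.cos (Real.pi / (n : ℝ))), 1; -1, 0])
    (lam : ℝ)
    (hlam : lam = (Real.cos (Real.pi / (m : ℝ)) * Real.cos (Real.pi / (n : ℝ))
        + Real.cos (Real.pi / (m : ℝ)) + Real.cos (Real.pi / (n : ℝ)) + 1) /
        (Real.sin (Real.pi / (m : ℝ)) * Real.sin (Real.pi / (n : ℝ)))) :
    1 < lam ∧
    spectrum ℝ (((-1 : ℝ) ^ (n / 2)) •
        ((B ^ (m / 2) * C ^ (n / 2) : Matrix.SpecialLinearGroup (Fin 2) ℝ) :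
          Matrix (Fin 2) (Fin 2) ℝ)) = {lam, lam⁻¹} := by
  have hsθ := sin_pi_div_pos (m := m) (by omega)
  have hsφ := sin_pi_div_pos (m := n) (by omega)
  change lam = cotHalfProd _ _ at hlam
  have hlam1 : 1 < lam :=
    hlam ▸ one_lt_cotHalfProd hsθ (cos_pi_div_pos (by omega)) hsφ (cos_pi_div_pos (by omega))
  have hdet : det ((B ^ (m / 2) * C ^ (n / 2) : Matrix.SpecialLinearGroup (Fin 2) ℝ) :
      Matrix (Fin 2) (Fin 2) ℝ) = 1 := Matrix.SpecialLinearGroup.det_coe _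
  have htr : sin (π / m) * sin (π / n) * trace ((-1 : ℝ) ^ (n / 2) •
      ((B ^ (m / 2) * C ^ (n / 2) : Matrix.SpecialLinearGroup (Fin 2) ℝ) :
        Matrix (Fin 2) (Fin 2) ℝ)) = 2 * (cos (π / m) * cos (π / n) + 1) := by
    rw [Matrix.SpecialLinearGroup.coe_mul, Matrix.SpecialLinearGroup.coe_pow,
      Matrix.SpecialLinearGroup.coe_pow, hB, hC]
    exact sin_mul_sin_mul_trace_of_mul_eq_pi_div_two (half_mul_pi_div_of_even hme (by omega))
      (half_mul_pi_div_of_even hne (by omega))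
  refine ⟨hlam1, spectrum_eq_pair_inv_of_det_eq_one _ ?_ (by positivity) ?_⟩
  · rw [det_smul, hdet, Fintype.card_fin, mul_one, ← pow_mul,
      (even_two.mul_left _).neg_one_pow]
  · rw [hlam, cotHalfProd_add_inv hsθ.ne' hsφ.ne', eq_div_iff (by positivity), mul_comm, htr]
end

section
/- Let m ≥ 3 be an integer that is not of the form 2p^k for any prime p and positive integer k, and let λ = 2cos(π/m). Then λ is a unit in the ring of integers of the number field ℚ(λ). -/
/-
Write `λ = ζ + ζ⁻¹` with `ζ = exp (π i / m)` a primitive `2m`-th root of unity. Since `ζ ^ m = -1`,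
`λ = ζ⁻¹ (1 - η)` with `η = ζ ^ (m + 2)`, a primitive root of unity of order `2m / gcd (2m, m + 2)`,
which is `2m`, `m` or `m / 2` according as `m` is odd, divisible by `4`, or `2` mod `4`. When `m` is
not of the form `2 p ^ k` this order is not a prime power, so `Φₙ(1) = ∏ (1 - ξ) = 1` over the
primitive `n`-th roots `ξ`, and the other factors of that product give an integral inverse of `1 - η`.
-/

open Real Polynomial

theorem gcd_two_mul_add_two_dvd_four (m : ℕ) : Nat.gcd (2 * m) (m + 2) ∣ 4 := by
  have h := Nat.dvd_sub ((Nat.gcd_dvd_right _ _).mul_left 2) (Nat.gcd_dvd_left (2 * m) (m + 2))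
  rwa [show 2 * (m + 2) - 2 * m = 4 by omega] at h

theorem two_mul_div_gcd_add_two_ne_prime_pow {m : ℕ} (hm : 3 ≤ m)
    (hnot : ¬ ∃ p k : ℕ, p.Prime ∧ 1 ≤ k ∧ m = 2 * p ^ k) {p : ℕ} (hp : p.Prime) (k : ℕ) :
    p ^ k ≠ 2 * m / Nat.gcd (2 * m) (m + 2) := by
  have hm_ne_two_pow (j : ℕ) : m ≠ 2 ^ j := by
    rintro rfl
    obtain _ | _ | j := j
    · norm_num at hm
    · norm_num at hm
    · exact hnot ⟨2, j + 1, Nat.prime_two, by omega, by ring⟩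
  have hp_two (h : 2 ∣ p ^ k) : p = 2 :=
    ((Nat.prime_dvd_prime_iff_eq Nat.prime_two hp).mp (Nat.prime_two.dvd_of_dvd_pow h)).symm
  intro hk
  have hg4 := gcd_two_mul_add_two_dvd_four m
  have hgk : Nat.gcd (2 * m) (m + 2) * p ^ k = 2 * m := by
    rw [hk, Nat.mul_div_cancel' (Nat.gcd_dvd_left _ _)]
  have hg_dvd : Nat.gcd (2 * m) (m + 2) ∣ m + 2 := Nat.gcd_dvd_right _ _
  have hg_le : Nat.gcd (2 * m) (m + 2) ≤ 4 := Nat.le_of_dvd (by norm_num) hg4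
  interval_cases Nat.gcd (2 * m) (m + 2)
  · simp at hg_dvd
  · obtain rfl := hp_two ⟨m, by omega⟩
    obtain _ | k := k
    · omega
    · exact hm_ne_two_pow k (by rw [pow_succ] at hgk; omega)
  · obtain rfl := hp_two ⟨m / 2, by omega⟩
    exact hm_ne_two_pow k (by omega)
  · norm_num at hg4
  · obtain _ | k := k
    · rw [pow_zero] at hgk; omega
    · exact hnot ⟨p, k + 1, hp, by omega, by omega⟩

section

variable {K : Type*} [Field K]

theorem IsPrimitiveRoot.isIntegral_inv_one_sub {η : K} {n : ℕ} (hη : IsPrimitiveRoot η n)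
    (hn0 : 0 < n) (hn : ∀ {p : ℕ}, p.Prime → ∀ k : ℕ, p ^ k ≠ n) :
    IsIntegral ℤ (1 - η)⁻¹ := by
  classical
  have hprod : ∏ ξ ∈ primitiveRoots n K, (1 - ξ) = 1 := by
    simpa [cyclotomic_eq_prod_X_sub_primitiveRoots hη, eval_prod]
      using eval_one_cyclotomic_not_prime_pow (R := K) hn
  have hη_mem : η ∈ primitiveRoots n K := (mem_primitiveRoots hn0).mpr hη
  rw [inv_eq_of_mul_eq_one_right ((Finset.mul_prod_erase _ _ hη_mem).trans hprod)]
  refine IsIntegral.prod _ fun ξ hξ => isIntegral_one.sub ?_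
  exact (isPrimitiveRoot_of_mem_primitiveRoots (Finset.mem_of_mem_erase hξ)).isIntegral hn0

theorem IsPrimitiveRoot.isIntegral_inv_add_inv {ζ : K} {m : ℕ} (hζ : IsPrimitiveRoot ζ (2 * m))
    (hm : 3 ≤ m) (hnot : ¬ ∃ p k : ℕ, p.Prime ∧ 1 ≤ k ∧ m = 2 * p ^ k) :
    ζ + ζ⁻¹ ≠ 0 ∧ IsIntegral ℤ (ζ + ζ⁻¹)⁻¹ := by
  have hn : ∀ {p : ℕ}, p.Prime → ∀ k, p ^ k ≠ 2 * m / Nat.gcd (2 * m) (m + 2) :=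
    fun hp => two_mul_div_gcd_add_two_ne_prime_pow hm hnot hp
  have hn0 : 0 < 2 * m / Nat.gcd (2 * m) (m + 2) :=
    Nat.div_pos (Nat.gcd_le_left _ (by omega)) (Nat.gcd_pos_of_pos_left _ (by omega))
  have hη : IsPrimitiveRoot (ζ ^ (m + 2)) (2 * m / Nat.gcd (2 * m) (m + 2)) := by
    rw [hζ.eq_orderOf, ← orderOf_pow' ζ (by omega)]
    exact IsPrimitiveRoot.orderOf _
  have hη_ne_one : 1 - ζ ^ (m + 2) ≠ 0 :=
    sub_ne_zero.mpr (hη.ne_one (by have := hn Nat.prime_two 0; omega)).symm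
  have hζ_pow : ζ ^ m = -1 := (hζ.pow (by omega) (mul_comm 2 m)).eq_neg_one_of_two_right
  have hζ0 : ζ ≠ 0 := hζ.ne_zero (by omega)
  have hfactor : ζ + ζ⁻¹ = ζ⁻¹ * (1 - ζ ^ (m + 2)) := by
    rw [pow_add, hζ_pow]
    field_simp
    ring
  rw [hfactor, mul_inv, inv_inv]
  exact ⟨mul_ne_zero (inv_ne_zero hζ0) hη_ne_one,
    (hζ.isIntegral (by omega)).mul (hη.isIntegral_inv_one_sub hn0 hn)⟩

end

theorem isUnit_mk_integralClosure {R L : Type*} [CommRing R] [Field L] [Algebra R L] {x : L}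
    (hx : IsIntegral R x) (hx_inv : IsIntegral R x⁻¹) (hx0 : x ≠ 0) :
    IsUnit (⟨x, hx⟩ : integralClosure R L) :=
  IsUnit.of_mul_eq_one (⟨x⁻¹, hx_inv⟩ : integralClosure R L) (Subtype.ext (mul_inv_cancel₀ hx0))

theorem Real.isIntegral_inv_two_mul_cos_pi_div {m : ℕ} (hm : 3 ≤ m)
    (hnot : ¬ ∃ p k : ℕ, p.Prime ∧ 1 ≤ k ∧ m = 2 * p ^ k) :
    2 * cos (π / m) ≠ 0 ∧ IsIntegral ℤ (2 * cos (π / m))⁻¹ := by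
  set ζ := Complex.exp (2 * π * Complex.I / (2 * m : ℕ))
  have hζ : IsPrimitiveRoot ζ (2 * m) := Complex.isPrimitiveRoot_exp (2 * m) (by omega)
  have hcos : ((2 * cos (π / m) : ℝ) : ℂ) = ζ + ζ⁻¹ := by
    rw [← Complex.exp_neg]
    push_cast
    rw [Complex.two_cos]
    congr 2 <;> push_cast <;> field_simp
  obtain ⟨hne, hint⟩ := hζ.isIntegral_inv_add_inv hm hnot
  rw [← hcos, ← Complex.ofReal_inv] at hint
  exact ⟨by exact_mod_cast hcos ▸ hne,
    (isIntegral_algebraMap_iff (B := ℂ) RCLike.ofReal_injective).mp hint⟩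

theorem stmt14 (m : ℕ) (hm : 3 ≤ m)
    (hnot : ¬ ∃ (p k : ℕ), p.Prime ∧ 1 ≤ k ∧ m = 2 * p ^ k)
    (lam : ℝ) (hlam : lam = 2 * Real.cos (Real.pi / (m : ℝ))) :
    ∃ x : integralClosure ℤ (IntermediateField.adjoin ℚ ({lam} : Set ℝ)),
      IsUnit x ∧ ((x : IntermediateField.adjoin ℚ ({lam} : Set ℝ)) : ℝ) = lam := by
  set K := IntermediateField.adjoin ℚ ({lam} : Set ℝ)
  obtain ⟨hlam0, hlam_inv⟩ := hlam ▸ isIntegral_inv_two_mul_cos_pi_div hm hnot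
  have hlam_int : IsIntegral ℤ lam := by
    simpa [hlam, div_eq_inv_mul] using isIntegral_two_mul_cos_rat_mul_pi (m : ℚ)⁻¹
  let y : K := ⟨lam, IntermediateField.mem_adjoin_simple_self ℚ lam⟩
  have hK : Function.Injective (algebraMap K ℝ) := Subtype.val_injective
  have hy : IsIntegral ℤ y := (isIntegral_algebraMap_iff hK).mp hlam_int
  have hy_inv : IsIntegral ℤ y⁻¹ := (isIntegral_algebraMap_iff hK).mp (by simpa using hlam_inv)
  exact ⟨⟨y, hy⟩, isUnit_mk_integralClosure hy hy_inv (ne_of_apply_ne Subtype.val hlam0), rfl⟩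
end

section
/- Let m = 2p^k where p is a prime and k is a positive integer, and let λ = 2cos(π/m). Then λ^{φ(m)} is an associate of p in the ring of integers of ℚ(λ), where φ is Euler's totient function; that is, λ^{φ(m)} = u·p for some unit u of the ring of integers of ℚ(λ). -/
/-!
With `ζ = exp(2πi/m)`, `λ² = (1 + ζ)(1 + ζ⁻¹) = (1 - η)(1 - η⁻¹)` for `η = -ζ`, which is a primitive
root of unity of prime-power order `p ^ s` with `φ(p ^ s) = φ(m)`. For any two primitive roots
`η, μ` of that order, `(1 - η) / (1 - μ)` is an algebraic integer, and `p = ∏ μ, (1 - μ)` over all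
of them. Hence `(λ ^ φ(m) / p) ^ 2` and its inverse are products of algebraic integers, so
`λ ^ φ(m) / p` is a unit of the ring of integers of `ℚ(λ)`.
-/

open Real Polynomial Finset

namespace IsPrimitiveRoot

section IsDomain

variable {R : Type*} [CommRing R] [IsDomain R] {ζ : R} {n : ℕ}

theorem pow_half_eq_neg_one (h : IsPrimitiveRoot ζ (2 * n)) (hn : n ≠ 0) : ζ ^ n = -1 :=
  (h.pow (by omega) (mul_comm 2 n)).eq_neg_one_of_two_right

theorem neg_eq_pow_succ (h : IsPrimitiveRoot ζ (2 * n)) (hn : n ≠ 0) : -ζ = ζ ^ (n + 1) := by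
  rw [pow_succ, h.pow_half_eq_neg_one hn, neg_one_mul]

theorem neg_of_odd (h : IsPrimitiveRoot ζ (2 * n)) (hn : Odd n) : IsPrimitiveRoot (-ζ) n := by
  obtain ⟨j, rfl⟩ := hn
  have hcop : (j + 1).Coprime (2 * j + 1) := by
    rw [show 2 * j + 1 = j + (j + 1) by ring]
    simp
  convert (h.pow (by omega) rfl).pow_of_coprime (j + 1) hcop using 1
  rw [← pow_mul, h.neg_eq_pow_succ (by omega)]
  ring_nf

theorem neg_of_even (h : IsPrimitiveRoot ζ (2 * n)) (hn : Even n) (hn0 : n ≠ 0) :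
    IsPrimitiveRoot (-ζ) (2 * n) := by
  have hcop : (n + 1).Coprime (2 * n) :=
    Nat.Coprime.mul_right (Nat.coprime_two_right.mpr hn.add_one) (by simp)
  rw [h.neg_eq_pow_succ hn0]
  exact h.pow_of_coprime _ hcop

theorem exists_neg_prime_pow {p k : ℕ} (hp : p.Prime) (hk : 1 ≤ k)
    (h : IsPrimitiveRoot ζ (2 * p ^ k)) :
    ∃ s, IsPrimitiveRoot (-ζ) (p ^ (s + 1)) ∧ (p ^ (s + 1)).totient = (2 * p ^ k).totient := by
  rcases hp.eq_two_or_odd' with rfl | hodd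
  · refine ⟨k, ?_, by rw [pow_succ']⟩
    rw [pow_succ']
    exact h.neg_of_even ((Nat.even_pow' (by omega)).mpr even_two) (by positivity)
  · obtain ⟨s, rfl⟩ : ∃ s, k = s + 1 := ⟨k - 1, by omega⟩
    exact ⟨s, h.neg_of_odd hodd.pow, (Nat.totient_two_mul_of_odd hodd.pow).symm⟩

end IsDomain

section Field

variable {K : Type*} [Field K] {n : ℕ}

theorem isIntegral_one_sub_div_one_sub {ζ ξ : K} (hζ : IsPrimitiveRoot ζ n) (hn : 1 < n)
    (hξ : ξ ^ n = 1) : IsIntegral ℤ ((1 - ξ) / (1 - ζ)) := by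
  have : NeZero n := ⟨by omega⟩
  obtain ⟨a, -, rfl⟩ := hζ.eq_pow_of_pow_eq_one hξ
  have hζ1 : 1 - ζ ≠ 0 := sub_ne_zero.mpr (hζ.ne_one hn).symm
  have hgeom : (1 - ζ ^ a) / (1 - ζ) = ∑ i ∈ range a, ζ ^ i := by
    rw [div_eq_iff hζ1, ← mul_neg_geom_sum, mul_comm]
  rw [hgeom]
  exact IsIntegral.sum _ fun i _ ↦ (hζ.isIntegral (by omega)).pow i

theorem prod_one_sub_primitiveRoots_prime_pow {p s : ℕ} (hp : p.Prime) {ζ : K}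
    (hζ : IsPrimitiveRoot ζ (p ^ (s + 1))) :
    ∏ μ ∈ primitiveRoots (p ^ (s + 1)) K, (1 - μ) = p := by
  have : Fact p.Prime := ⟨hp⟩
  simpa [cyclotomic_eq_prod_X_sub_primitiveRoots hζ, eval_prod] using
    eval_one_cyclotomic_prime_pow (R := K) (p := p) s

theorem isIntegral_pow_totient_div_prime {p s : ℕ} (hp : p.Prime) {η x : K}
    (hη : IsPrimitiveRoot η (p ^ (s + 1))) (hx : x ^ 2 = (1 - η) * (1 - η⁻¹)) :
    IsIntegral ℤ (x ^ (p ^ (s + 1)).totient / p) ∧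
      IsIntegral ℤ (x ^ (p ^ (s + 1)).totient / p)⁻¹ := by
  set n := p ^ (s + 1)
  have hn : 1 < n := Nat.one_lt_pow (by omega) hp.one_lt
  have hprim : ∀ μ ∈ primitiveRoots n K, IsPrimitiveRoot μ n := fun μ hμ ↦
    (mem_primitiveRoots (by omega)).mp hμ
  have hsq : (x ^ n.totient / p) ^ 2 =
      ∏ μ ∈ primitiveRoots n K, ((1 - η) / (1 - μ) * ((1 - η⁻¹) / (1 - μ))) := by
    rw [prod_mul_distrib, prod_div_distrib, prod_div_distrib, prod_const, prod_const,
      hη.card_primitiveRoots, hη.prod_one_sub_primitiveRoots_prime_pow hp, div_pow, ← pow_mul,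
      mul_comm, pow_mul, hx, mul_pow]
    ring
  constructor
  · refine IsIntegral.of_pow two_pos ?_
    rw [hsq]
    exact IsIntegral.prod _ fun μ hμ ↦
      ((hprim μ hμ).isIntegral_one_sub_div_one_sub hn hη.pow_eq_one).mul
        ((hprim μ hμ).isIntegral_one_sub_div_one_sub hn hη.inv.pow_eq_one)
  · refine IsIntegral.of_pow two_pos ?_
    rw [inv_pow, hsq, ← prod_inv_distrib]
    simp only [mul_inv, inv_div]
    exact IsIntegral.prod _ fun μ hμ ↦
      (hη.isIntegral_one_sub_div_one_sub hn (hprim μ hμ).pow_eq_one).mul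
        (hη.inv.isIntegral_one_sub_div_one_sub hn (hprim μ hμ).pow_eq_one)

end Field

end IsPrimitiveRoot

theorem Complex.two_cos_sq (z : ℂ) :
    (2 * cos z) ^ 2 = (1 + exp (2 * z * I)) * (1 + (exp (2 * z * I))⁻¹) := by
  have hw : exp (z * I) ≠ 0 := exp_ne_zero _
  rw [two_cos, show 2 * z * I = z * I + z * I by ring, exp_add, neg_mul, exp_neg]
  field_simp
  ring

theorem IntermediateField.isIntegral_of_isIntegral_ofReal {K : IntermediateField ℚ ℝ} {y : K}
    (h : IsIntegral ℤ ((y : ℝ) : ℂ)) : IsIntegral ℤ y :=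
  (isIntegral_algebraMap_iff (algebraMap K ℝ).injective).mp
    ((isIntegral_algebraMap_iff (algebraMap ℝ ℂ).injective).mp h)

theorem integralClosure.isUnit_mk {R K : Type*} [CommRing R] [Field K] [Algebra R K] {y : K}
    (hy0 : y ≠ 0) (hy : IsIntegral R y) (hy' : IsIntegral R y⁻¹) :
    IsUnit (⟨y, hy⟩ : integralClosure R K) :=
  IsUnit.of_mul_eq_one ⟨y⁻¹, hy'⟩ (Subtype.ext (mul_inv_cancel₀ hy0))

theorem stmt15 (m p k : ℕ) (hp : p.Prime) (hk : 1 ≤ k) (hm : m = 2 * p ^ k)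
    (lam : ℝ) (hlam : lam = 2 * Real.cos (Real.pi / (m : ℝ))) :
    ∃ u : integralClosure ℤ (IntermediateField.adjoin ℚ ({lam} : Set ℝ)),
      IsUnit u ∧
        lam ^ Nat.totient m = ((u : IntermediateField.adjoin ℚ ({lam} : Set ℝ)) : ℝ) * p := by
  set ζ := Complex.exp (2 * π * Complex.I / m)
  have hζ : IsPrimitiveRoot ζ (2 * p ^ k) :=
    hm ▸ Complex.isPrimitiveRoot_exp m (by simp [hm, hp.ne_zero])
  obtain ⟨s, hη, htot⟩ := hζ.exists_neg_prime_pow hp hk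
  have hsq : (lam : ℂ) ^ 2 = (1 - -ζ) * (1 - (-ζ)⁻¹) := by
    rw [hlam, inv_neg, sub_neg_eq_add, sub_neg_eq_add]
    push_cast
    rw [Complex.two_cos_sq, show 2 * (π / m : ℂ) * Complex.I = 2 * π * Complex.I / m by ring]
  have hlam0 : lam ≠ 0 := by
    rintro rfl
    have h1 : 1 < p ^ (s + 1) := Nat.one_lt_pow (by omega) hp.one_lt
    obtain h | h := mul_eq_zero.mp (hsq.symm.trans (by simp))
    exacts [hη.ne_one h1 (sub_eq_zero.mp h).symm, hη.inv.ne_one h1 (sub_eq_zero.mp h).symm]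
  obtain ⟨hy, hy'⟩ := hη.isIntegral_pow_totient_div_prime hp hsq
  rw [htot, ← hm] at hy hy'
  set y : IntermediateField.adjoin ℚ ({lam} : Set ℝ) :=
    IntermediateField.AdjoinSimple.gen ℚ lam ^ m.totient / p
  have hyC : ((y : ℝ) : ℂ) = (lam : ℂ) ^ m.totient / p := by simp [y]
  have hy0 : y ≠ 0 := by
    rw [ne_eq, ← Subtype.coe_inj]
    simp [y, hlam0, hp.ne_zero]
  refine ⟨⟨y, IntermediateField.isIntegral_of_isIntegral_ofReal (hyC ▸ hy)⟩,
    integralClosure.isUnit_mk hy0 _ (IntermediateField.isIntegral_of_isIntegral_ofReal ?_), ?_⟩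
  · rwa [IntermediateField.coe_inv, Complex.ofReal_inv, hyC]
  · simp [y, hp.ne_zero]
end

section
/- Let λ = 2cos(π/7) and let G_{4,7} be the subgroup of SL(2,ℝ) generated by A = [[1, 2cos(π/4) + 2cos(π/7)], [0, 1]] and B = [[2cos(π/4), 1], [−1, 0]]. Then λ² + λ + 1 is not in the G_{4,7}-orbit of ∞ under the Möbius action: for every M ∈ G_{4,7}, M·∞ ≠ λ² + λ + 1. -/
open Real Matrix

/-!
Reduce modulo the prime `√2 = 2 cos (π / 4)` of the ring `𝒪` of real algebraic integers, whose
residue field has characteristic `2`. There `A ≡ !![1, λ; 0, 1]` and `B ≡ !![0, 1; 1, 0]`, and both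
preserve the quadratic form `a² + λ a c + c²`; it equals `1` on the first column `(1, 0)` of the
identity, hence on the first column `(a, c)` of every `M` in the group generated by `A` and `B`. But `x = λ² + λ + 1` satisfies
`x² + λ x + 1 = 2 (5 λ² + 5 λ - 1) ≡ 0`, so `a = x c` would force `1 ≡ 0`, i.e. `1 / √2 ∈ 𝒪`,
which fails because `(1 / √2)² = 1 / 2 ∉ ℤ`.
-/

local notation "𝒪" => integralClosure ℤ ℝ

lemma inv_notMem_integralClosure_of_sq_eq_two {s : ℝ} (hs2 : s ^ 2 = 2) : s⁻¹ ∉ 𝒪 := by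
  intro h
  have hhalf : IsIntegral ℤ (1 / 2 : ℝ) := by
    have := pow_mem h 2
    rwa [mem_integralClosure_iff, inv_pow, hs2, ← one_div] at this
  obtain ⟨k, hk⟩ := hhalf.exists_int_iff_exists_rat.mp ⟨1 / 2, by norm_num⟩
  have hk0 : (0 : ℝ) < k := by rw [← hk]; norm_num
  have hk1 : (k : ℝ) < 1 := by rw [← hk]; norm_num
  have : (0 : ℤ) < k ∧ k < 1 := ⟨by exact_mod_cast hk0, by exact_mod_cast hk1⟩
  omega

lemma two_mul_cos_pi_div_mem_integralClosure (n : ℕ) : 2 * cos (π / n) ∈ 𝒪 := by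
  simpa [mem_integralClosure_iff, div_eq_inv_mul] using isIntegral_two_mul_cos_rat_mul_pi (1 / n)

lemma two_mul_cos_pi_div_seven_cubic :
    (2 * cos (π / 7)) ^ 3 = (2 * cos (π / 7)) ^ 2 + 2 * (2 * cos (π / 7)) - 1 := by
  set x := cos (π / 7)
  have hx : 0 < x := cos_pos_of_mem_Ioo ⟨by linarith [pi_pos], by linarith [pi_pos]⟩
  have h43 : cos (4 * (π / 7)) = -cos (3 * (π / 7)) := by
    rw [← cos_pi_sub]; congr 1; ring
  have h4 : cos (4 * (π / 7)) = 2 * (2 * x ^ 2 - 1) ^ 2 - 1 := by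
    rw [show 4 * (π / 7) = 2 * (2 * (π / 7)) by ring, cos_two_mul, cos_two_mul]
  rw [h4, cos_three_mul] at h43
  have hfactor : (x + 1) * (8 * x ^ 3 - 4 * x ^ 2 - 4 * x + 1) = 0 := by linear_combination h43
  have hcubic := (mul_eq_zero.mp hfactor).resolve_left (by positivity)
  linear_combination hcubic

/-- Divisibility by `s` in `𝒪` is encoded as integrality of the quotient by `s`. -/
def OnConicMod (s l a c : ℝ) : Prop :=
  a ∈ 𝒪 ∧ c ∈ 𝒪 ∧ (a ^ 2 + l * a * c + c ^ 2 - 1) / s ∈ 𝒪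

namespace OnConicMod

variable {s l a c : ℝ}

lemma one_zero : OnConicMod s l 1 0 :=
  ⟨one_mem _, zero_mem _, by simp⟩

lemma neg (h : OnConicMod s l a c) : OnConicMod s l (-a) (-c) := by
  obtain ⟨ha, hc, hq⟩ := h
  exact ⟨neg_mem ha, neg_mem hc, by convert hq using 2; ring⟩

lemma rotate (hs2 : s ^ 2 = 2) (hs : s ∈ 𝒪) (hl : l ∈ 𝒪) (h : OnConicMod s l a c) :
    OnConicMod s l (-c) a := by
  obtain ⟨ha, hc, hq⟩ := h
  have hs0 : s ≠ 0 := by rintro rfl; norm_num at hs2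
  refine ⟨neg_mem hc, ha, ?_⟩
  have : ((-c) ^ 2 + l * (-c) * a + a ^ 2 - 1) / s
      = (a ^ 2 + l * a * c + c ^ 2 - 1) / s - s * l * a * c := by
    field_simp; linear_combination (l * a * c) * hs2
  rw [this]
  aesop

lemma shear (hs2 : s ^ 2 = 2) (hs : s ∈ 𝒪) {t w : ℝ} (ht : t ∈ 𝒪) (hw : w ∈ 𝒪)
    (htw : t * (t + l) = s * w) (h : OnConicMod s l a c) : OnConicMod s l (a + t * c) c := by
  obtain ⟨ha, hc, hq⟩ := h
  have hs0 : s ≠ 0 := by rintro rfl; norm_num at hs2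
  refine ⟨by aesop, hc, ?_⟩
  have : ((a + t * c) ^ 2 + l * (a + t * c) * c + c ^ 2 - 1) / s
      = (a ^ 2 + l * a * c + c ^ 2 - 1) / s + s * t * a * c + w * c ^ 2 := by
    field_simp; linear_combination (-(t * a * c)) * hs2 + c ^ 2 * htw
  rw [this]
  aesop

lemma translate (hs2 : s ^ 2 = 2) (hs : s ∈ 𝒪) (hl : l ∈ 𝒪) (h : OnConicMod s l a c) :
    OnConicMod s l (a + (s + l) * c) c :=
  h.shear hs2 hs (w := s + 3 * l + s * l ^ 2) (by aesop) (by aesop)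
    (by linear_combination (-l ^ 2) * hs2)

lemma translate_inv (hs2 : s ^ 2 = 2) (hs : s ∈ 𝒪) (hl : l ∈ 𝒪) (h : OnConicMod s l a c) :
    OnConicMod s l (a - (s + l) * c) c := by
  convert h.shear hs2 hs (t := -(s + l)) (w := s + l) (by aesop) (by aesop) (by ring) using 1
  ring

lemma elliptic (hs2 : s ^ 2 = 2) (hs : s ∈ 𝒪) (hl : l ∈ 𝒪) (h : OnConicMod s l a c) :
    OnConicMod s l (s * a + c) (-a) := by
  convert (h.rotate hs2 hs hl).neg.shear hs2 hs (t := -s) (w := s - l) (by aesop) (by aesop)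
    (by ring) using 1
  ring

lemma elliptic_inv (hs2 : s ^ 2 = 2) (hs : s ∈ 𝒪) (hl : l ∈ 𝒪) (h : OnConicMod s l a c) :
    OnConicMod s l (-c) (a + s * c) :=
  (h.shear hs2 hs (w := s + l) hs (by aesop) (by ring)).rotate hs2 hs hl

lemma not_sq_add_self_add_one_mul (hs2 : s ^ 2 = 2) (hs : s ∈ 𝒪) (hl : l ∈ 𝒪)
    (hl3 : l ^ 3 = l ^ 2 + 2 * l - 1) (c : ℝ) :
    ¬ OnConicMod s l ((l ^ 2 + l + 1) * c) c := by
  rintro ⟨-, hc, hq⟩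
  have hs0 : s ≠ 0 := by rintro rfl; norm_num at hs2
  have hx : (l ^ 2 + l + 1) ^ 2 + l * (l ^ 2 + l + 1) + 1 = 2 * (5 * l ^ 2 + 5 * l - 1) := by
    linear_combination (l + 4) * hl3
  have : s⁻¹ = s * (5 * l ^ 2 + 5 * l - 1) * c ^ 2
      - (((l ^ 2 + l + 1) * c) ^ 2 + l * ((l ^ 2 + l + 1) * c) * c + c ^ 2 - 1) / s := by
    field_simp
    linear_combination c ^ 2 * hx - (c ^ 2 * (5 * l ^ 2 + 5 * l - 1)) * hs2
  apply inv_notMem_integralClosure_of_sq_eq_two hs2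
  rw [this]
  aesop

end OnConicMod

namespace Matrix.SpecialLinearGroup

variable {M N : SpecialLinearGroup (Fin 2) ℝ} {p q r u : ℝ}

lemma coe_mul_col_of_coe_eq (hM : (M : Matrix (Fin 2) (Fin 2) ℝ) = !![p, q; r, u]) :
    (M * N : SpecialLinearGroup (Fin 2) ℝ) 0 0 = p * N 0 0 + q * N 1 0 ∧
      (M * N : SpecialLinearGroup (Fin 2) ℝ) 1 0 = r * N 0 0 + u * N 1 0 := by
  simp [coe_mul, Matrix.mul_apply, Fin.sum_univ_two, hM]

lemma coe_inv_of_coe_eq (hM : (M : Matrix (Fin 2) (Fin 2) ℝ) = !![p, q; r, u]) :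
    ((M⁻¹ : SpecialLinearGroup (Fin 2) ℝ) : Matrix (Fin 2) (Fin 2) ℝ) = !![u, -q; -r, p] := by
  rw [coe_inv, hM, adjugate_fin_two_of]

end Matrix.SpecialLinearGroup

open Matrix.SpecialLinearGroup in
lemma onConicMod_of_mem_closure {s l : ℝ} (hs2 : s ^ 2 = 2) (hs : s ∈ 𝒪) (hl : l ∈ 𝒪)
    {A B : Matrix.SpecialLinearGroup (Fin 2) ℝ}
    (hA : (A : Matrix (Fin 2) (Fin 2) ℝ) = !![1, s + l; 0, 1])
    (hB : (B : Matrix (Fin 2) (Fin 2) ℝ) = !![s, 1; -1, 0])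
    {M : Matrix.SpecialLinearGroup (Fin 2) ℝ} (hM : M ∈ Subgroup.closure {A, B}) :
    OnConicMod s l (M 0 0) (M 1 0) := by
  induction hM using Subgroup.closure_induction_left with
  | one => simpa using OnConicMod.one_zero
  | mul_left x hx y _ ih =>
    rcases hx with rfl | rfl
    · obtain ⟨h0, h1⟩ := coe_mul_col_of_coe_eq (N := y) hA
      rw [h0, h1]
      convert ih.translate hs2 hs hl using 1 <;> ring
    · obtain ⟨h0, h1⟩ := coe_mul_col_of_coe_eq (N := y) hB
      rw [h0, h1]
      convert ih.elliptic hs2 hs hl using 1 <;> ring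
  | inv_mul_cancel x hx y _ ih =>
    rcases hx with rfl | rfl
    · obtain ⟨h0, h1⟩ := coe_mul_col_of_coe_eq (N := y) (coe_inv_of_coe_eq hA)
      rw [h0, h1]
      convert ih.translate_inv hs2 hs hl using 1 <;> ring
    · obtain ⟨h0, h1⟩ := coe_mul_col_of_coe_eq (N := y) (coe_inv_of_coe_eq hB)
      rw [h0, h1]
      convert ih.elliptic_inv hs2 hs hl using 1 <;> ring

theorem stmt16 (lam : ℝ) (hlam : lam = 2 * Real.cos (Real.pi / 7))
    (A B : Matrix.SpecialLinearGroup (Fin 2) ℝ)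
    (hA : (A : Matrix (Fin 2) (Fin 2) ℝ) =
      !![1, 2 * Real.cos (Real.pi / 4) + 2 * Real.cos (Real.pi / 7); 0, 1])
    (hB : (B : Matrix (Fin 2) (Fin 2) ℝ) =
      !![2 * Real.cos (Real.pi / 4), 1; -1, 0]) :
    ∀ M ∈ Subgroup.closure ({A, B} : Set (Matrix.SpecialLinearGroup (Fin 2) ℝ)),
      (M : Matrix (Fin 2) (Fin 2) ℝ) 1 0 ≠ 0 →
        (M : Matrix (Fin 2) (Fin 2) ℝ) 0 0 / (M : Matrix (Fin 2) (Fin 2) ℝ) 1 0 ≠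
          lam ^ 2 + lam + 1 := by
  intro M hM hc heq
  have hs2 : (2 * cos (π / 4)) ^ 2 = 2 := by
    rw [cos_pi_div_four]; ring_nf; norm_num
  have hs : 2 * cos (π / 4) ∈ 𝒪 := by exact_mod_cast two_mul_cos_pi_div_mem_integralClosure 4
  have hl : lam ∈ 𝒪 := by exact_mod_cast hlam ▸ two_mul_cos_pi_div_mem_integralClosure 7
  rw [← hlam] at hA
  have hM00 : (M : Matrix (Fin 2) (Fin 2) ℝ) 0 0 = (lam ^ 2 + lam + 1) * M 1 0 := by
    rw [← heq, div_mul_cancel₀ _ hc]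
  have := onConicMod_of_mem_closure hs2 hs hl hA hB hM
  rw [hM00] at this
  exact OnConicMod.not_sq_add_self_add_one_mul hs2 hs hl (hlam ▸ two_mul_cos_pi_div_seven_cubic) _ this
end

section
/- Let λ = 2cos(π/7), A = [[1, 2λ], [0, 1]], C = [[−λ, 1], [−1, 0]], and M = A·C⁵. Then M = [[−1 − 2λ², 2λ² + 3λ − 2], [−λ, λ² − 1]], |tr M| = 2 + λ² > 2 (so M is hyperbolic), and the two fixed points of the Möbius action of M on ℝ are (3λ² + √(7λ² + λ − 1))/(2λ) and (3λ² − √(7λ² + λ − 1))/(2λ), both of which lie in the subfield ℚ(cos(π/7)) of ℝ. -/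
/-!
`λ = 2 cos(π/7)` is a root of `x³ - x² - 2x + 1`, since `cos(4π/7) = -cos(3π/7)` is a cubic
relation in `cos(π/7)`. Reducing modulo this cubic collapses the entries of `A C⁵` to
quadratics in `λ`, and it makes the discriminant `7λ² + λ - 1` of the fixed-point equation the
perfect square `(λ² + 2λ - 2)²`. The fixed points are therefore rational functions of `λ`,
hence of `cos(π/7)`.
-/

open Real Matrix

theorem one_lt_two_cos_pi_div_seven : 1 < 2 * cos (π / 7) := by
  have : cos (π / 3) < cos (π / 7) :=
    cos_lt_cos_of_nonneg_of_le_pi (by positivity) (by linarith [pi_pos]) (by linarith [pi_pos])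
  rw [cos_pi_div_three] at this
  linarith

theorem cos_pi_div_seven_cubic :
    8 * cos (π / 7) ^ 3 - 4 * cos (π / 7) ^ 2 - 4 * cos (π / 7) + 1 = 0 := by
  set c := cos (π / 7)
  have h_double : cos (4 * (π / 7)) = 2 * (2 * c ^ 2 - 1) ^ 2 - 1 := by
    rw [show 4 * (π / 7) = 2 * (2 * (π / 7)) by ring, cos_two_mul, cos_two_mul]
  have h_triple : cos (4 * (π / 7)) = -(4 * c ^ 3 - 3 * c) := by
    rw [show 4 * (π / 7) = π - 3 * (π / 7) by ring, cos_pi_sub, cos_three_mul]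
  have hc : c + 1 ≠ 0 := by linarith [one_lt_two_cos_pi_div_seven]
  have : (c + 1) * (8 * c ^ 3 - 4 * c ^ 2 - 4 * c + 1) = 0 := by
    linear_combination h_triple - h_double
  exact (mul_eq_zero.mp this).resolve_left hc

theorem two_cos_pi_div_seven_cubic :
    (2 * cos (π / 7)) ^ 3 - (2 * cos (π / 7)) ^ 2 - 2 * (2 * cos (π / 7)) + 1 = 0 := by
  linear_combination cos_pi_div_seven_cubic

theorem mul_pow_five_eq_of_cubic {R : Type*} [CommRing R] {l : R}
    (hl : l ^ 3 - l ^ 2 - 2 * l + 1 = 0) :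
    !![1, 2 * l; 0, 1] * !![-l, 1; -1, 0] ^ 5 =
      !![-1 - 2 * l ^ 2, 2 * l ^ 2 + 3 * l - 2; -l, l ^ 2 - 1] := by
  simp only [pow_succ, pow_zero, Matrix.one_fin_two, Matrix.mul_fin_two]
  ext i j
  fin_cases i <;> fin_cases j <;> simp
  · linear_combination (1 - 3 * l - 3 * l ^ 2) * hl
  · linear_combination (3 + 3 * l) * hl
  · linear_combination (-1 - l) * hl
  · linear_combination hl

theorem setOf_mobius_fixed_eq {K : Type*} [Field K] [NeZero (2 : K)] {a b c d s : K}
    (hc : c ≠ 0) (hs : (a - d) ^ 2 + 4 * b * c = s * s) :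
    {z : K | a * z + b = (c * z + d) * z} =
      {(a - d + s) / (2 * c), (a - d - s) / (2 * c)} := by
  have hdiscrim : discrim c (d - a) (-b) = s * s := by rw [discrim]; linear_combination hs
  ext z
  rw [Set.mem_ofPred_eq, Set.mem_insert_iff, Set.mem_singleton_iff, ← neg_sub d a,
    ← quadratic_eq_zero_iff hc hdiscrim]
  constructor <;> intro h <;> linear_combination -h

theorem setOf_fixed_eq_of_cubic {K : Type*} [Field K] [NeZero (2 : K)] {l : K}
    (hl : l ^ 3 - l ^ 2 - 2 * l + 1 = 0) (hl0 : l ≠ 0) :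
    {z : K | (-1 - 2 * l ^ 2) * z + (2 * l ^ 2 + 3 * l - 2) = (-l * z + (l ^ 2 - 1)) * z} =
      {(3 * l ^ 2 + (l ^ 2 + 2 * l - 2)) / (2 * l),
        (3 * l ^ 2 - (l ^ 2 + 2 * l - 2)) / (2 * l)} := by
  rw [setOf_mobius_fixed_eq (neg_ne_zero.mpr hl0) (s := l ^ 2 + 2 * l - 2)
    (by linear_combination (8 * l - 4) * hl), Set.pair_comm]
  congr 1
  · field_simp; ring
  · congr 1; field_simp; ring

theorem sqrt_eq_of_cubic {l : ℝ} (hl : l ^ 3 - l ^ 2 - 2 * l + 1 = 0) (hl1 : 1 < l) :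
    √(7 * l ^ 2 + l - 1) = l ^ 2 + 2 * l - 2 := by
  rw [sqrt_eq_iff_mul_self_eq_of_pos (by nlinarith)]
  linear_combination (l + 5) * hl

theorem stmt18 (lam : ℝ) (hlam : lam = 2 * Real.cos (Real.pi / 7))
    (A C M : Matrix (Fin 2) (Fin 2) ℝ)
    (hA : A = !![1, 2 * lam; 0, 1])
    (hC : C = !![-lam, 1; -1, 0])
    (hM : M = A * C ^ 5) :
    M = !![-1 - 2 * lam ^ 2, 2 * lam ^ 2 + 3 * lam - 2; -lam, lam ^ 2 - 1] ∧
    |Matrix.trace M| = 2 + lam ^ 2 ∧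
    2 < |Matrix.trace M| ∧
    {z : ℝ | M 0 0 * z + M 0 1 = (M 1 0 * z + M 1 1) * z} =
      {(3 * lam ^ 2 + Real.sqrt (7 * lam ^ 2 + lam - 1)) / (2 * lam),
        (3 * lam ^ 2 - Real.sqrt (7 * lam ^ 2 + lam - 1)) / (2 * lam)} ∧
    (3 * lam ^ 2 + Real.sqrt (7 * lam ^ 2 + lam - 1)) / (2 * lam) ∈
      Subfield.closure ({Real.cos (Real.pi / 7)} : Set ℝ) ∧
    (3 * lam ^ 2 - Real.sqrt (7 * lam ^ 2 + lam - 1)) / (2 * lam) ∈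
      Subfield.closure ({Real.cos (Real.pi / 7)} : Set ℝ) := by
  have hcubic : lam ^ 3 - lam ^ 2 - 2 * lam + 1 = 0 := hlam ▸ two_cos_pi_div_seven_cubic
  have hlam1 : 1 < lam := hlam ▸ one_lt_two_cos_pi_div_seven
  have hMeq : M = !![-1 - 2 * lam ^ 2, 2 * lam ^ 2 + 3 * lam - 2; -lam, lam ^ 2 - 1] := by
    rw [hM, hA, hC, mul_pow_five_eq_of_cubic hcubic]
  have htrace : |M.trace| = 2 + lam ^ 2 := by
    rw [hMeq, trace_fin_two_of, abs_of_neg (by nlinarith)]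
    ring
  have hlam_mem : lam ∈ Subfield.closure {cos (π / 7)} :=
    hlam ▸ mul_mem (ofNat_mem _ 2) (Subfield.subset_closure rfl)
  rw [sqrt_eq_of_cubic hcubic hlam1]
  refine ⟨hMeq, htrace, by rw [htrace]; nlinarith, ?_, by aesop, by aesop⟩
  rw [hMeq]
  exact setOf_fixed_eq_of_cubic hcubic (by positivity)
end
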